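/- Fix an integer t ≥ 1. Let i ≥ 1 and j ∈ {1,2,3}, and let x be a word over [t]^8 that is a common subsequence of π_i and π_{i+j} such that the projection of x⟨ℓ⟩ to the first 6 coordinates is the same for all positions ℓ of x. Then |x| ≤ t. -/

import Mathlib

/-- Lexicographic "strictly smaller" for vectors in `Fin r → ℤ`. -/
def lexLt {r : ℕ} (x y : Fin r → ℤ) : Prop :=
  ∃ j : Fin r, (∀ i : Fin r, i < j → x i = y i) ∧ x j < y j

/-- The `u`-twisted order on the alphabet `[t]^r`: `a` weakly precedes `b` in `π(u)`
iff `a = b` or `(u₁a₁, …, u_r a_r)` is lexicographically smaller than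
`(u₁b₁, …, u_r b_r)` (letters of `[t] = {1,…,t}` are represented by `Fin t`,
with `a i : Fin t` standing for the letter `(a i : ℤ) + 1`). -/
def uLe {t r : ℕ} (u : Fin r → ℤ) (a b : Fin r → Fin t) : Prop :=
  a = b ∨ lexLt (fun i => u i * ((a i : ℤ) + 1)) (fun i => u i * ((b i : ℤ) + 1))

instance {t r : ℕ} (u : Fin r → ℤ) : DecidableRel (uLe (t := t) (r := r) u) := fun a b => by
  unfold uLe lexLt; infer_instance

/-- `piWord t r u = π(u)`: the word listing every element of the alphabet `[t]^r`
exactly once, in increasing `u`-twisted lexicographic order. -/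
noncomputable def piWord (t r : ℕ) (u : Fin r → ℤ) : List (Fin r → Fin t) :=
  (Finset.univ.toList (α := Fin r → Fin t)).mergeSort (fun a b => decide (uLe u a b))

/-- `LCS ws` is the length of a longest word that is a subsequence of every word in `ws`. -/
noncomputable def LCS {α : Type*} (ws : List (List α)) : ℕ :=
  sSup {L | ∃ x : List α, (∀ w ∈ ws, x.Sublist w) ∧ x.length = L}

/-- The eight sign vectors `u^{(1)}, …, u^{(8)}` (rows), with `+` as `1` and `-` as `-1`. -/
def uMat : Fin 8 → Fin 8 → ℤ :=
  ![![1, 1, 1, 1, 1, 1, 1, 1],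
    ![-1, -1, -1, 1, -1, 1, -1, -1],
    ![1, 1, 1, -1, -1, -1, -1, 1],
    ![-1, 1, -1, -1, 1, 1, 1, -1],
    ![1, -1, -1, 1, -1, -1, 1, 1],
    ![-1, 1, 1, 1, 1, -1, -1, -1],
    ![1, -1, -1, -1, 1, 1, -1, 1],
    ![-1, -1, 1, -1, -1, -1, 1, -1]]

/-- `uSeq i = u^{(i)}` for `i ≥ 1`: the periodic extension `u^{(i)} = u^{(i mod 8)}`,
with the representative of `i mod 8` taken in `{1,…,8}`. -/
def uSeq (i : ℕ) : Fin 8 → ℤ := uMat ⟨(i - 1) % 8, Nat.mod_lt _ (by norm_num)⟩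

/-- `piSeq t i = π_i = π(u^{(i)})`, a permutation of the alphabet `[t]^8`. -/
noncomputable def piSeq (t : ℕ) (i : ℕ) : List (Fin 8 → Fin t) := piWord t 8 (uSeq i)

/- ==================== auxiliary lemmas ==================== -/

lemma lexLt_iff {r : ℕ} (x y : Fin r → ℤ) : lexLt x y ↔ toLex x < toLex y := Iff.rfl

lemma lexLt_trans {r : ℕ} {x y z : Fin r → ℤ} (h1 : lexLt x y) (h2 : lexLt y z) :
    lexLt x z := by
  rw [lexLt_iff] at *
  exact lt_trans h1 h2

lemma lexLt_trichotomy {r : ℕ} (x y : Fin r → ℤ) : lexLt x y ∨ x = y ∨ lexLt y x := by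
  have h := (Pi.isTrichotomous_lex (β := fun _ : Fin r => ℤ)
      ((· < ·)) (fun {_} => ((· < ·) : ℤ → ℤ → Prop))
      (IsWellFounded.wf)).trichotomous x y
  by_cases h1 : lexLt x y
  · exact Or.inl h1
  by_cases h2 : lexLt y x
  · exact Or.inr (Or.inr h2)
  exact Or.inr (Or.inl (h h1 h2))

lemma mySignNeg {a b : ℤ} (ha : a = 1 ∨ a = -1) (hb : b = 1 ∨ b = -1) (h : a ≠ b) :
    b = -a := by
  rcases ha with rfl | rfl <;> rcases hb with rfl | rfl <;> omega

lemma uMat_sign : ∀ k c : Fin 8, uMat k c = 1 ∨ uMat k c = -1 := by decide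

lemma uSeq_sign (i : ℕ) (c : Fin 8) : uSeq i c = 1 ∨ uSeq i c = -1 := by
  unfold uSeq; exact uMat_sign _ c

lemma uSeq_ne_zero (i : ℕ) (c : Fin 8) : uSeq i c ≠ 0 := by
  rcases uSeq_sign i c with h | h <;> rw [h] <;> norm_num

lemma uLe_total {t : ℕ} (u : Fin 8 → ℤ) (hu : ∀ c, u c ≠ 0) (a b : Fin 8 → Fin t) :
    uLe u a b ∨ uLe u b a := by
  rcases lexLt_trichotomy (fun i => u i * ((a i : ℤ) + 1)) (fun i => u i * ((b i : ℤ) + 1))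
    with h | h | h
  · exact Or.inl (Or.inr h)
  · left; left
    funext c
    have := congrFun h c
    have h2 : ((a c : ℤ) + 1) = ((b c : ℤ) + 1) := mul_left_cancel₀ (hu c) this
    have h3 : (a c : ℤ) = (b c : ℤ) := by linarith
    exact Fin.ext (by exact_mod_cast h3)
  · exact Or.inr (Or.inr h)

lemma uLe_trans {t : ℕ} (u : Fin 8 → ℤ) (a b c : Fin 8 → Fin t)
    (h1 : uLe u a b) (h2 : uLe u b c) : uLe u a c := by
  rcases h1 with rfl | h1
  · exact h2
  rcases h2 with rfl | h2
  · exact Or.inr h1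
  · exact Or.inr (lexLt_trans h1 h2)

lemma piWord_sorted {t : ℕ} (u : Fin 8 → ℤ) (hu : ∀ c, u c ≠ 0) :
    (piWord t 8 u).Pairwise (uLe u) := by
  have h := List.pairwise_mergeSort (le := fun a b => decide (uLe u a b))
    (fun a b c h1 h2 => by
      simp only [decide_eq_true_eq] at *
      exact uLe_trans u a b c h1 h2)
    (fun a b => by
      simp only [Bool.or_eq_true, decide_eq_true_eq]
      exact uLe_total u hu a b)
    (Finset.univ.toList (α := Fin 8 → Fin t))
  unfold piWord
  exact h.imp (fun h => by simpa using h)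

lemma piWord_nodup {t : ℕ} (u : Fin 8 → ℤ) : (piWord t 8 u).Nodup :=
  ((List.mergeSort_perm _ _).nodup_iff).mpr (Finset.nodup_toList _)

/-- Key extraction: along a common-projection sublist of `π(u)`, consecutive
elements compare strictly in coordinate 6 or agree there and compare strictly in 7. -/
lemma step_lemma {t : ℕ} (u : Fin 8 → ℤ) (hu : ∀ c, u c ≠ 0)
    (x : List (Fin 8 → Fin t)) (hx : x.Sublist (piWord t 8 u))
    (hproj : ∀ a b : Fin x.length, ∀ c : Fin 8, (c : ℕ) < 6 → x.get a c = x.get b c)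
    (p q : Fin x.length) (hpq : p < q) :
    u 6 * ((x.get p 6 : ℤ) + 1) < u 6 * ((x.get q 6 : ℤ) + 1) ∨
    (x.get p 6 = x.get q 6 ∧ u 7 * ((x.get p 7 : ℤ) + 1) < u 7 * ((x.get q 7 : ℤ) + 1)) := by
  have hsorted : x.Pairwise (uLe u) := (piWord_sorted u hu).sublist hx
  have hnd : x.Nodup := hx.nodup (piWord_nodup u)
  have hle : uLe u (x.get p) (x.get q) :=
    List.Pairwise.rel_get_of_lt hsorted hpq
  have hne : x.get p ≠ x.get q := fun h => absurd (hnd.get_inj_iff.mp h) (Fin.ne_of_lt hpq)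
  rcases hle with h | ⟨j, hj, hjlt⟩
  · exact absurd h hne
  · simp only at hjlt
    have hj6 : 6 ≤ (j : ℕ) := by
      by_contra hlt
      push_neg at hlt
      have := hproj p q j hlt
      rw [this] at hjlt
      exact lt_irrefl _ hjlt
    have : (j : ℕ) = 6 ∨ (j : ℕ) = 7 := by omega
    rcases this with h6 | h7
    · left
      have : j = (6 : Fin 8) := Fin.ext h6
      rwa [this] at hjlt
    · right
      have hj7 : j = (7 : Fin 8) := Fin.ext h7
      subst hj7
      have h6eq := hj 6 (by decide)
      simp only at h6eq
      have h2 : ((x.get p 6 : ℤ) + 1) = ((x.get q 6 : ℤ) + 1) := mul_left_cancel₀ (hu 6) h6eq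
      have h3 : (x.get p 6 : ℤ) = (x.get q 6 : ℤ) := by linarith
      exact ⟨Fin.ext (by exact_mod_cast h3), hjlt⟩

/-- If some coordinate is injective along the word, the word has length ≤ t. -/
lemma length_le_of_coord_inj {t : ℕ} (x : List (Fin 8 → Fin t)) (c : Fin 8)
    (h : ∀ p q : Fin x.length, p < q → x.get p c ≠ x.get q c) : x.length ≤ t := by
  have hinj : Function.Injective (fun p : Fin x.length => x.get p c) := by
    intro p q hpq
    by_contra hne
    rcases lt_trichotomy p q with h1 | h1 | h1
    · exact h p q h1 hpq
    · exact hne h1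
    · exact h q p h1 hpq.symm
  calc x.length = Fintype.card (Fin x.length) := (Fintype.card_fin _).symm
    _ ≤ Fintype.card (Fin t) := Fintype.card_le_of_injective _ hinj
    _ = t := Fintype.card_fin _

lemma uSeq_shift (i j : ℕ) (hi : 1 ≤ i) :
    uSeq (i + j) = uMat ⟨((i - 1) % 8 + j) % 8, Nat.mod_lt _ (by norm_num)⟩ := by
  have hmod : (i + j - 1) % 8 = ((i - 1) % 8 + j) % 8 := by omega
  unfold uSeq
  exact congrArg uMat (Fin.ext hmod)

lemma uMat_pairs_ne : ∀ k : Fin 8, ∀ j : Fin 4, 1 ≤ (j : ℕ) →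
    uMat k 6 ≠ uMat ⟨((k : ℕ) + (j : ℕ)) % 8, Nat.mod_lt _ (by norm_num)⟩ 6 ∨
    uMat k 7 ≠ uMat ⟨((k : ℕ) + (j : ℕ)) % 8, Nat.mod_lt _ (by norm_num)⟩ 7 := by decide

/-- For `t ≥ 1`, `i ≥ 1` and `j ∈ {1,2,3}`: if `x` is a common subsequence of `π_i` and
`π_{i+j}` all of whose symbols agree in their first `6` coordinates, then `|x| ≤ t`. -/
theorem stmt18 (t : ℕ) (ht : 1 ≤ t) (i j : ℕ) (hi : 1 ≤ i) (hj : 1 ≤ j) (hj3 : j ≤ 3)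
    (x : List (Fin 8 → Fin t))
    (hx1 : x.Sublist (piSeq t i)) (hx2 : x.Sublist (piSeq t (i + j)))
    (hproj : ∀ a b : Fin x.length, ∀ c : Fin 8, (c : ℕ) < 6 → x.get a c = x.get b c) :
    x.length ≤ t := by
  set u := uSeq i with hu_def
  set v := uSeq (i + j) with hv_def
  have hu : ∀ c, u c ≠ 0 := uSeq_ne_zero i
  have hv : ∀ c, v c ≠ 0 := uSeq_ne_zero (i + j)
  have hE := step_lemma u hu x hx1 hproj
  have hD := step_lemma v hv x hx2 hproj
  -- the sign pairs differ
  have hne : u 6 ≠ v 6 ∨ u 7 ≠ v 7 := by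
    have hshift := uSeq_shift i j hi
    have := uMat_pairs_ne ⟨(i - 1) % 8, Nat.mod_lt _ (by norm_num)⟩ ⟨j, by omega⟩ (by simpa)
    rw [hu_def, hv_def, hshift]
    exact this
  have hu6 := uSeq_sign i 6
  have hv6 := uSeq_sign (i + j) 6
  have hu7 := uSeq_sign i 7
  have hv7 := uSeq_sign (i + j) 7
  rw [← hu_def] at hu6 hu7
  rw [← hv_def] at hv6 hv7
  by_cases h6 : u 6 = v 6
  · -- then u 7 = - v 7 ; coordinate 6 is injective along x
    have h7 : v 7 = -(u 7) := by
      rcases hne with hc | hc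
      · exact absurd h6 hc
      · exact mySignNeg hu7 hv7 hc
    apply length_le_of_coord_inj x 6
    intro p q hpq hc
    rcases hE p q hpq with hA | ⟨heq, hB⟩
    · rw [hc] at hA; exact lt_irrefl _ hA
    · rcases hD p q hpq with hA' | ⟨_, hB'⟩
      · rw [heq] at hA'
        exact lt_irrefl _ hA'
      · rw [h7] at hB'
        have : u 7 * ((x.get q 7 : ℤ) + 1) < u 7 * ((x.get p 7 : ℤ) + 1) := by linarith
        linarith
  · -- u 6 = - v 6 ; coordinate 7 is injective along x
    have h6' : v 6 = -(u 6) := mySignNeg hu6 hv6 h6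
    apply length_le_of_coord_inj x 7
    intro p q hpq hc
    rcases hE p q hpq with hA | ⟨heq, hB⟩
    · rcases hD p q hpq with hA' | ⟨heq', _⟩
      · rw [h6'] at hA'; linarith
      · rw [heq'] at hA; exact lt_irrefl _ hA
    · rcases hD p q hpq with hA' | ⟨_, hB'⟩
      · rw [heq] at hA'; exact lt_irrefl _ hA'
      · by_cases h7 : u 7 = v 7
        · rw [hc] at hB; exact lt_irrefl _ hB
        · have h7' : v 7 = -(u 7) := by
            rcases hu7 with h | h <;> rcases hv7 with h' | h' <;> simp_all
          rw [h7'] at hB'; linarith
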